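/- Let G be a finitely generated, torsion-free, nilpotent group with finite symmetric generating set S, and let a, b, g ∈ G. If the distances dist_S(a^k, g b^k) are bounded over all positive integers k (i.e., sup_{k∈ℤ⁺} dist_S(a^k, g b^k) < ∞), then b = g⁻¹ a g. -/

import Mathlib

/-- The Cayley graph of a group `G` with respect to a symmetric set `S`
not containing the identity: `g` is adjacent to `h` iff `g⁻¹ * h ∈ S`. -/
def cayleyGraph {G : Type*} [Group G] (S : Set G)
    (hsymm : ∀ s ∈ S, s⁻¹ ∈ S) (hid : (1 : G) ∉ S) : SimpleGraph G where
  Adj g h := g⁻¹ * h ∈ S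
  symm := by
    refine ⟨?_⟩
    intro g h hgh
    have h2 := hsymm _ hgh
    simpa [mul_inv_rev] using h2
  loopless := by
    refine ⟨?_⟩
    intro g hg
    simp only [inv_mul_cancel] at hg
    exact hid hg

/-- Torsion-free monoid, with the meaning `Monoid.IsTorsionFree` had in the older Mathlib. -/
def Monoid.IsTorsionFree (G : Type*) [Monoid G] : Prop :=
  ∀ g : G, g ≠ 1 → ¬IsOfFinOrder g

/-!
The elements `(a ^ k)⁻¹ * (g * b ^ k)`, `k > 0`, lie in the ball of radius `C` about `1` in the
Cayley graph, which is finite since `S` is, so two of them coincide. For `k < l = k + m` this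
says `g * b ^ m = a ^ m * g`, i.e. `(g * b * g⁻¹) ^ m = a ^ m`, and `m`-th roots are unique in a
torsion-free nilpotent group: if `x ^ m = y ^ m` and `x⁻¹ * y` lies in the term `Z (j + 1)` of
the upper central series, then it is central modulo `Z j`, so `(x⁻¹ * y) ^ m ∈ Z j`;
torsion-freeness passes from `G` to each `Z (j + 1) / Z j`, so `x⁻¹ * y ∈ Z j`, and descending
the series gives `x = y`.
-/

open scoped commutatorElement Pointwise

theorem commutatorElement_pow_left_of_mem_center {G : Type*} [Group G] {x g : G}
    (h : ⁅x, g⁆ ∈ Subgroup.center G) (n : ℕ) : ⁅x ^ n, g⁆ = ⁅x, g⁆ ^ n := by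
  induction n with
  | zero => simp
  | succ n ih =>
    have hconj : x * ⁅x, g⁆ ^ n * x⁻¹ = ⁅x, g⁆ ^ n := by
      rw [Subgroup.mem_center_iff.mp (pow_mem h n) x, mul_inv_cancel_right]
    calc ⁅x ^ (n + 1), g⁆ = x * ⁅x ^ n, g⁆ * x⁻¹ * ⁅x, g⁆ := by
          simp only [commutatorElement_def]; group
      _ = ⁅x, g⁆ ^ (n + 1) := by rw [ih, hconj, pow_succ]

namespace Subgroup

variable {G : Type*} [Group G]

theorem mk_mem_center_iff_mem_upperCentralSeries_succ {j : ℕ} {x : G} :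
    (x : G ⧸ upperCentralSeries G j) ∈ center (G ⧸ upperCentralSeries G j) ↔
      x ∈ upperCentralSeries G (j + 1) :=
  (SetLike.ext_iff.mp (upperCentralSeriesStep_eq_comap_center (upperCentralSeries G j)) x).symm

variable (htf : Monoid.IsTorsionFree G) {n : ℕ}
include htf

theorem mem_upperCentralSeries_of_pow_mem (hn : n ≠ 0) {j : ℕ} {x : G}
    (hx : x ∈ upperCentralSeries G (j + 1)) (hxn : x ^ n ∈ upperCentralSeries G j) :
    x ∈ upperCentralSeries G j := by
  induction j generalizing x with
  | zero =>
    rw [upperCentralSeries_zero, mem_bot] at hxn ⊢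
    by_contra hx1
    exact htf x hx1 (isOfFinOrder_iff_pow_eq_one.mpr ⟨n, Nat.pos_of_ne_zero hn, hxn⟩)
  | succ j ih =>
    refine mem_upperCentralSeries_succ_iff.mpr fun g =>
      ih (mem_upperCentralSeries_succ_iff.mp hx g) ?_
    have hcentral : ((⁅x, g⁆ : G) : G ⧸ upperCentralSeries G j) ∈ center _ :=
      mk_mem_center_iff_mem_upperCentralSeries_succ.mpr (mem_upperCentralSeries_succ_iff.mp hx g)
    have hxn' : ⁅x ^ n, g⁆ ∈ upperCentralSeries G j :=
      mem_upperCentralSeries_succ_iff.mp hxn g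
    rw [← QuotientGroup.eq_one_iff] at hxn' ⊢
    rw [QuotientGroup.mk_pow]
    rw [← QuotientGroup.mk'_apply, map_commutatorElement] at hcentral hxn' ⊢
    rwa [← commutatorElement_pow_left_of_mem_center hcentral, ← map_pow]

theorem inv_mul_mem_upperCentralSeries_of_pow_eq_pow (hn : n ≠ 0) {j : ℕ} {x y : G}
    (hxy : x ^ n = y ^ n) (hd : x⁻¹ * y ∈ upperCentralSeries G (j + 1)) :
    x⁻¹ * y ∈ upperCentralSeries G j := by
  refine mem_upperCentralSeries_of_pow_mem htf hn hd ?_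
  have hcomm : Commute (x : G ⧸ upperCentralSeries G j) ↑(x⁻¹ * y) :=
    mem_center_iff.mp (mk_mem_center_iff_mem_upperCentralSeries_succ.mpr hd) _
  have hpow : (x : G ⧸ upperCentralSeries G j) ^ n * ↑(x⁻¹ * y) ^ n =
      (x : G ⧸ upperCentralSeries G j) ^ n := by
    rw [← hcomm.mul_pow, ← QuotientGroup.mk_mul, mul_inv_cancel_left, ← QuotientGroup.mk_pow,
      ← hxy, QuotientGroup.mk_pow]
  rw [← QuotientGroup.eq_one_iff, QuotientGroup.mk_pow]
  exact mul_eq_left.mp hpow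

end Subgroup

namespace Monoid.IsTorsionFree

variable {G : Type*} [Group G] [Group.IsNilpotent G] (htf : Monoid.IsTorsionFree G) {n : ℕ}
include htf

theorem pow_left_injective (hn : n ≠ 0) : Function.Injective fun x : G => x ^ n := by
  intro x y hxy
  suffices ∀ j, x⁻¹ * y ∈ Subgroup.upperCentralSeries G j → x = y by
    obtain ⟨m, hm⟩ := Group.IsNilpotent.nilpotent' (G := G)
    exact this m (hm ▸ Subgroup.mem_top _)
  intro j
  induction j with
  | zero => exact fun hd => inv_mul_eq_one.mp (Subgroup.mem_bot.mp hd)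
  | succ j ih =>
    exact fun hd => ih (Subgroup.inv_mul_mem_upperCentralSeries_of_pow_eq_pow htf hn hxy hd)

theorem semiconjBy_of_pow (hn : n ≠ 0) {g x y : G} (h : SemiconjBy g (x ^ n) (y ^ n)) :
    SemiconjBy g x y := by
  have hconj : (g * x * g⁻¹) ^ n = y ^ n := by
    rw [conj_pow, h.eq, mul_inv_cancel_right]
  rw [SemiconjBy, ← htf.pow_left_injective hn hconj, inv_mul_cancel_right]

end Monoid.IsTorsionFree

theorem Set.Finite.pow {M : Type*} [Monoid M] {s : Set M} (hs : s.Finite) (n : ℕ) :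
    (s ^ n).Finite := by
  induction n with
  | zero => rw [pow_zero]; exact Set.finite_one
  | succ n ih => rw [pow_succ]; exact ih.mul hs

theorem semiconjBy_pow_of_inv_pow_mul_eq {G : Type*} [Group G] {a b g : G} {k n : ℕ}
    (h : (a ^ k)⁻¹ * (g * b ^ k) = (a ^ (k + n))⁻¹ * (g * b ^ (k + n))) :
    SemiconjBy g (b ^ n) (a ^ n) := by
  rw [add_comm k n, pow_add, pow_add, mul_inv_rev, mul_assoc, mul_left_cancel_iff,
    ← mul_assoc g, ← mul_assoc] at h
  exact (eq_inv_mul_iff_mul_eq.mp (mul_right_cancel h)).symm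

section CayleyGraph

variable {G : Type*} [Group G] {S : Set G} {hsymm : ∀ s ∈ S, s⁻¹ ∈ S} {hid : (1 : G) ∉ S}

theorem cayleyGraph_adj_mul_right {x s : G} :
    (cayleyGraph S hsymm hid).Adj x (x * s) ↔ s ∈ S := by
  simp [cayleyGraph]

theorem cayleyGraph_connected (hgen : Subgroup.closure S = ⊤) :
    (cayleyGraph S hsymm hid).Connected := by
  have hreach (x : G) : (cayleyGraph S hsymm hid).Reachable 1 x := by
    have hx : x ∈ Subgroup.closure S := hgen ▸ Subgroup.mem_top x
    induction hx using Subgroup.closure_induction_right with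
    | one => rfl
    | mul_right x _ s hs ih => exact ih.trans (cayleyGraph_adj_mul_right.mpr hs).reachable
    | mul_inv_cancel x _ s hs ih =>
      exact ih.trans (cayleyGraph_adj_mul_right.mpr (hsymm s hs)).reachable
  exact ⟨fun x y => (hreach x).symm.trans (hreach y)⟩

theorem inv_mul_mem_pow_of_walk {x y : G} (p : (cayleyGraph S hsymm hid).Walk x y) :
    x⁻¹ * y ∈ insert 1 S ^ p.length := by
  induction p with
  | nil => simp
  | @cons u v w huv p ih =>
    rw [SimpleGraph.Walk.length_cons, pow_succ']
    simpa [mul_assoc] using Set.mul_mem_mul (Set.mem_insert_of_mem 1 huv) ih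

theorem SimpleGraph.Connected.inv_mul_mem_pow_dist (hconn : (cayleyGraph S hsymm hid).Connected)
    (x y : G) : x⁻¹ * y ∈ insert 1 S ^ (cayleyGraph S hsymm hid).dist x y := by
  obtain ⟨p, hp⟩ := hconn.exists_walk_length_eq_dist x y
  exact hp ▸ inv_mul_mem_pow_of_walk p

end CayleyGraph

theorem conjugate_of_bounded_distance_general
    {G : Type*} [Group G] [Group.IsNilpotent G]
    (htf : Monoid.IsTorsionFree G)
    (S : Set G) (hfin : S.Finite)
    (hsymm : ∀ t ∈ S, t⁻¹ ∈ S) (hid : (1 : G) ∉ S)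
    (hgen : Subgroup.closure S = ⊤)
    (a b g : G)
    (hbdd : ∃ C : ℕ, ∀ k : ℕ, 0 < k →
      (cayleyGraph S hsymm hid).dist (a ^ k) (g * b ^ k) ≤ C) :
    b = g⁻¹ * a * g := by
  obtain ⟨C, hC⟩ := hbdd
  have hconn : (cayleyGraph S hsymm hid).Connected := cayleyGraph_connected hgen
  have hball : Set.MapsTo (fun k => (a ^ k)⁻¹ * (g * b ^ k)) (Set.Ioi 0) (insert 1 S ^ C) :=
    fun k hk => Set.pow_subset_pow_right (Set.mem_insert 1 S) (hC k hk)
      (hconn.inv_mul_mem_pow_dist _ _)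
  obtain ⟨k, -, l, -, hkl, heq⟩ :=
    (Set.Ioi_infinite 0).exists_lt_map_eq_of_mapsTo hball ((hfin.insert 1).pow C)
  obtain ⟨m, rfl⟩ := Nat.exists_eq_add_of_lt hkl
  have hsemiconj : SemiconjBy g b a :=
    htf.semiconjBy_of_pow m.succ_ne_zero (semiconjBy_pow_of_inv_pow_mul_eq heq)
  rw [mul_assoc, ← hsemiconj.eq, inv_mul_cancel_left]

/-- **Lemma 2.7(10).** In a finitely generated, torsion-free, nilpotent group
`G` with finite symmetric generating set `S`: if the distances
`dist_S(aᵏ, g·bᵏ)` are bounded over `k ∈ ℤ⁺`, then `b = g⁻¹ a g`. -/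
theorem conjugate_of_bounded_distance
    {G : Type*} [Group G] [Group.FG G] [Group.IsNilpotent G]
    (htf : Monoid.IsTorsionFree G)
    (S : Set G) (hfin : S.Finite)
    (hsymm : ∀ t ∈ S, t⁻¹ ∈ S) (hid : (1 : G) ∉ S)
    (hgen : Subgroup.closure S = ⊤)
    (a b g : G)
    (hbdd : ∃ C : ℕ, ∀ k : ℕ, 0 < k →
      (cayleyGraph S hsymm hid).dist (a ^ k) (g * b ^ k) ≤ C) :
    b = g⁻¹ * a * g :=
  conjugate_of_bounded_distance_general htf S hfin hsymm hid hgen a b g hbdd
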